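/- arXiv:2010.04475 — 6 statements merged into one kernel-verified Lean document; each statement's English description precedes it below -/
import Mathlib

section
/- Let α > 0, let x₁ = (3 + 2α - √(9 - 4α + 4α²))/(8α), and let β = min(1, 1/α). Then x₁ ∈ [0, β] and f(x₁) ≥ f(x) for all x ∈ [0, β], where f(x) = (x - αx²)(1-x)²; i.e., f attains its maximum on [0, β] at x₁. -/
set_option maxHeartbeats 1600000 in
theorem f_max_at_x1 (α : ℝ) (hα : 0 < α)
    (x₁ : ℝ) (hx₁ : x₁ = (3 + 2*α - Real.sqrt (9 - 4*α + 4*α^2))/(8*α))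
    (β : ℝ) (hβ : β = min 1 (1/α))
    (f : ℝ → ℝ) (hf : f = fun x => (x - α*x^2)*(1-x)^2) :
    x₁ ∈ Set.Icc (0:ℝ) β ∧ ∀ x ∈ Set.Icc (0:ℝ) β, f x ≤ f x₁ := by
  have hα8 : (8:ℝ)*α ≠ 0 := by positivity
  set s : ℝ := Real.sqrt (9 - 4*α + 4*α^2) with hs
  have hs0 : 0 ≤ s := Real.sqrt_nonneg _
  have hs2 : s^2 = 9 - 4*α + 4*α^2 := by
    rw [hs, Real.sq_sqrt]; nlinarith [sq_nonneg (2*α-1)]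
  have hsle : s ≤ 3 + 2*α := by nlinarith
  have hs1 : 1 ≤ s := by nlinarith [sq_nonneg (2*α-1)]
  have hx₁s : 8*α*x₁ = 3 + 2*α - s := by
    rw [hx₁]; field_simp
  have hq : 4*α*x₁^2 - (3+2*α)*x₁ + 1 = 0 := by
    have h1 : (8*α*x₁)^2 = (3+2*α-s)^2 := by rw [hx₁s]
    have h2 : (8*α) * ((8*α) * (4*α*x₁^2 - (3+2*α)*x₁ + 1)) = 0 := by
      nlinarith [h1, hs2]
    have h3 := (mul_eq_zero.1 h2).resolve_left hα8
    exact (mul_eq_zero.1 h3).resolve_left hα8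
  -- 0 ≤ x₁
  have hx₁0 : 0 ≤ x₁ := by nlinarith [hx₁s, hsle]
  -- s ≥ 3 - 6α  hence  x₁ ≤ 1
  have h36 : 3 - 6*α ≤ s := by
    by_contra h
    push_neg at h
    have h2 : s^2 < (3-6*α)^2 := by nlinarith
    nlinarith [h2, hs2]
  have hx₁1 : x₁ ≤ 1 := by nlinarith [hx₁s, h36]
  -- s ≥ 2α - 5  hence  α x₁ ≤ 1
  have h25 : 2*α - 5 ≤ s := by
    by_contra h
    push_neg at h
    have h2 : s^2 < (2*α-5)^2 := by nlinarith
    nlinarith [h2, hs2]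
  have hx₁a : α * x₁ ≤ 1 := by nlinarith [hx₁s, h25]
  -- 2 α x₁ ≤ 1 (since s ≥ 2α - 1)
  have h21 : 2*α - 1 ≤ s := by
    by_contra h
    push_neg at h
    have h2 : s^2 < (2*α-1)^2 := by nlinarith
    nlinarith [h2, hs2]
  have h2a : 2*α*x₁ ≤ 1 := by nlinarith [hx₁s, h21]
  have hmem : x₁ ∈ Set.Icc (0:ℝ) β := by
    refine ⟨hx₁0, ?_⟩
    rw [hβ, le_min_iff]
    constructor
    · exact hx₁1
    · rw [le_div_iff₀ hα]; linarith [hx₁a]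
  refine ⟨hmem, ?_⟩
  intro x hx
  obtain ⟨hx0, hxβ⟩ := hx
  rw [hβ, le_min_iff] at hxβ
  obtain ⟨hx1, hx1a⟩ := hxβ
  have hxa : α * x ≤ 1 := by
    rw [le_div_iff₀ hα] at hx1a; linarith
  -- key factorization
  have hg : 0 ≤ α*x^2 - (1+2*α-2*α*x₁)*x - (-(2+α) + (2+4*α)*x₁ - 3*α*x₁^2) := by
    rcases le_or_gt α 1 with hA | hA
    · -- α ≤ 1 : compare with value at x = 1
      have hbm : 0 ≤ (1+2*α-2*α*x₁) - α*(1+x) := by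
        linarith [mul_le_mul_of_nonneg_left hx1 hα.le, h2a]
      have hg1 : 0 ≤ 1 - (2+2*α)*x₁ + 3*α*x₁^2 := by
        have h4 : 4*(1 - (2+2*α)*x₁ + 3*α*x₁^2)
            = 1 + x₁ - 2*α*x₁ + 3*(4*α*x₁^2 - (3+2*α)*x₁ + 1) := by ring
        rw [hq] at h4
        linarith [h2a, hx₁0, h4]
      linarith [mul_nonneg (sub_nonneg.2 hx1) hbm, hg1]
    · -- α > 1 : compare with value at x = 1/α
      have h2b : 2*α*x₁ ≤ 2*α - 1 := by linarith [hx₁s, hs1]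
      have hbm : 0 ≤ (1+2*α-2*α*x₁) - (1 + α*x) := by linarith
      have key2 : 32*α*(α - 4*α*x₁ + 3*α*x₁^2)
          = 3*(2*α-3)^2 + s*(10*α-9) + 24*α*(4*α*x₁^2 - (3+2*α)*x₁ + 1)
            + (9-10*α)*(8*α*x₁ - (3+2*α-s)) := by ring
      have hg2 : 0 ≤ α - 4*α*x₁ + 3*α*x₁^2 := by
        have h4 : 0 ≤ 32*α*(α - 4*α*x₁ + 3*α*x₁^2) := by
          rw [key2, hq]
          have : 8*α*x₁ - (3+2*α-s) = 0 := by linarith [hx₁s]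
          rw [this]
          nlinarith [hs0, hA]
        nlinarith [h4, hα]
      have h5 : 0 ≤ α * (α*x^2 - (1+2*α-2*α*x₁)*x - (-(2+α) + (2+4*α)*x₁ - 3*α*x₁^2)) := by
        nlinarith [mul_nonneg (sub_nonneg.2 hxa) hbm, mul_nonneg hα.le hg2]
      nlinarith [h5, hα]
  have key : f x₁ - f x = (x - x₁)^2 *
      (α*x^2 - (1+2*α-2*α*x₁)*x - (-(2+α) + (2+4*α)*x₁ - 3*α*x₁^2)) := by
    rw [hf]
    simp only
    linear_combination ((x₁-1)*(x-x₁)) * hq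
  linarith [key, mul_nonneg (sq_nonneg (x - x₁)) hg]
end

section
/- Let α > 0, μ_α = √(4α² - 4α + 9), and A_α = (2α + 3 - μ_α)(5 - 2α + μ_α)(6α - 3 + μ_α)² / (4096 α³). If 0 ≤ V² ≤ A_α, then there exists x ∈ [0, 1) such that x(1 - α|x|)(1 - x)² = V². -/
open Set

/-- Equivalent to `3 - 6α < μ_α < 3 + 2α`, which follows by comparing squares. -/
lemma div_sub_sqrt_mem_Ico {α : ℝ} (hα : 0 < α) :
    (3 + 2*α - Real.sqrt (4*α^2 - 4*α + 9)) / (8*α) ∈ Ico 0 1 := by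
  set μ := Real.sqrt (4*α^2 - 4*α + 9)
  have hμ0 : 0 ≤ μ := Real.sqrt_nonneg _
  have hμ2 : μ^2 = 4*α^2 - 4*α + 9 := Real.sq_sqrt (by nlinarith [sq_nonneg (2*α - 1)])
  have hlt : μ < 3 + 2*α := by nlinarith
  have hgt : 3 - 6*α < μ := by
    rcases le_or_gt α 1 with h1 | h1 <;> nlinarith
  have h8α : 0 < 8*α := by positivity
  exact ⟨div_nonneg (by linarith) h8α.le, (div_lt_one h8α).2 (by linarith)⟩

lemma mul_one_sub_mul_mul_one_sub_sq_eq {α μ x : ℝ} (hα : α ≠ 0)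
    (hx : x = (3 + 2*α - μ) / (8*α)) :
    x*(1 - α*x)*(1 - x)^2 =
      (2*α + 3 - μ)*(5 - 2*α + μ)*(6*α - 3 + μ)^2 / (4096*α^3) := by
  subst hx
  field_simp
  ring

theorem exists_root_below_pullin_general (α : ℝ) (hα : 0 < α) (V : ℝ)
    (μ : ℝ) (hμ : μ = Real.sqrt (4*α^2 - 4*α + 9))
    (A : ℝ) (hA : A = (2*α + 3 - μ)*(5 - 2*α + μ)*(6*α - 3 + μ)^2 / (4096*α^3))
    (hV : V^2 ≤ A) :
    ∃ x ∈ Set.Ico (0:ℝ) 1, x*(1 - α*|x|)*(1 - x)^2 = V^2 := by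
  set x₁ := (3 + 2*α - μ) / (8*α) with hx₁
  have hx₁_mem : x₁ ∈ Ico 0 1 := by rw [hx₁, hμ]; exact div_sub_sqrt_mem_Ico hα
  have hfx₁ : x₁*(1 - α*|x₁|)*(1 - x₁)^2 = A := by
    rw [abs_of_nonneg hx₁_mem.1, hA]
    exact mul_one_sub_mul_mul_one_sub_sq_eq hα.ne' hx₁
  have hcont : Continuous fun x : ℝ => x*(1 - α*|x|)*(1 - x)^2 := by fun_prop
  obtain ⟨x, hx, hfx⟩ := intermediate_value_Icc hx₁_mem.1 hcont.continuousOn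
    ⟨by simpa using sq_nonneg V, hfx₁ ▸ hV⟩
  exact ⟨x, ⟨hx.1, hx.2.trans_lt hx₁_mem.2⟩, hfx⟩

theorem exists_root_below_pullin (α : ℝ) (hα : 0 < α) (V : ℝ)
    (μ : ℝ) (hμ : μ = Real.sqrt (4*α^2 - 4*α + 9))
    (A : ℝ) (hA : A = (2*α + 3 - μ)*(5 - 2*α + μ)*(6*α - 3 + μ)^2 / (4096*α^3))
    (hV₀ : 0 ≤ V^2) (hV : V^2 ≤ A) :
    ∃ x ∈ Set.Ico (0:ℝ) 1, x*(1 - α*|x|)*(1 - x)^2 = V^2 :=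
  exists_root_below_pullin_general α hα V μ hμ A hA hV
end

section
/- Let α > 0, μ_α = √(4α² - 4α + 9), x₁ = (3 + 2α - μ_α)/(8α), and f(x) = (x - αx²)(1-x)². Then f(x₁) = (2α + 3 - μ_α)(5 - 2α + μ_α)(6α - 3 + μ_α)² / (4096 α³). -/
theorem f_at_x1_closed_form (α : ℝ) (hα : 0 < α)
    (μ : ℝ) (hμ : μ = Real.sqrt (4*α^2 - 4*α + 9))
    (x₁ : ℝ) (hx₁ : x₁ = (3 + 2*α - μ)/(8*α))
    (f : ℝ → ℝ) (hf : f = fun x => (x - α*x^2)*(1-x)^2) :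
    f x₁ = (2*α + 3 - μ)*(5 - 2*α + μ)*(6*α - 3 + μ)^2 / (4096*α^3) := by
  subst hf hx₁
  have hα' : α ≠ 0 := ne_of_gt hα
  simp only
  field_simp
  ring
end

section
/- Let α > 0, V_m ≥ 0, and suppose y ∈ ℝ with |y| < 1/α, y < 1, and y(1 - α|y|)(1 - y)² ≥ V_m². Then y ≥ 0, 2 V_m √α ≤ 1 - y, and hence y ≤ min(1/α, 1 - 2 V_m √α). -/
theorem max_estimate_case2 (α Vm y : ℝ) (hα : 0 < α) (hVm : 0 ≤ Vm)
    (hy₁ : |y| < 1/α) (hy₂ : y < 1)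
    (hineq : Vm^2 ≤ y*(1 - α*|y|)*(1 - y)^2) :
    0 ≤ y ∧ 2*Vm*Real.sqrt α ≤ 1 - y ∧ y ≤ min (1/α) (1 - 2*Vm*Real.sqrt α) := by
  have habs : 0 ≤ |y| := abs_nonneg y
  have h1 : 0 < 1 - α*|y| := by
    have := (lt_div_iff₀' hα).mp hy₁
    linarith
  have hsq : 0 < (1 - y)^2 := pow_pos (by linarith) 2
  have hy0 : 0 ≤ y := by
    by_contra h
    push_neg at h
    nlinarith [mul_pos h1 hsq, sq_nonneg Vm]
  have hay : |y| = y := abs_of_nonneg hy0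
  rw [hay] at hineq
  -- y(1-αy) ≤ 1/(4α)
  have hkey : 4*α*Vm^2 ≤ (1-y)^2 := by
    nlinarith [sq_nonneg (1 - 2*α*y), sq_nonneg Vm]
  have hsa : Real.sqrt α ^ 2 = α := Real.sq_sqrt hα.le
  have hsann : 0 ≤ Real.sqrt α := Real.sqrt_nonneg α
  have h2 : 2*Vm*Real.sqrt α ≤ 1 - y := by
    nlinarith [sq_nonneg (2*Vm*Real.sqrt α - (1-y)), sq_nonneg (2*Vm*Real.sqrt α + (1-y))]
  refine ⟨hy0, h2, le_min ?_ (by linarith)⟩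
  calc y = |y| := hay.symm
    _ ≤ 1/α := hy₁.le
end

section
/- Let x : ℝ → ℝ be a continuously differentiable T-periodic function and t₀, t ∈ [0, T]. Then x(t) - x(t₀) ≥ -(√T / 2) (∫₀ᵀ (ẋ(s))² ds)^{1/2}. -/
/-!
Since `∫₀ᵀ ẋ = 0`, the positive and negative parts of `ẋ` each integrate to `½ ∫₀ᵀ |ẋ|`
over a period. Whatever the order of `t₀` and `t`, `x t - x t₀ = ∫_{t₀}^{t} ẋ` therefore loses at
most the integral of one of these parts, so it is at least `-½ ∫₀ᵀ |ẋ|`, and Cauchy–Schwarz bounds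
`∫₀ᵀ |ẋ|` by `√T (∫₀ᵀ ẋ²)^{1/2}`.
-/

open MeasureTheory Set

theorem sq_integral_abs_le_measureReal_univ_mul_integral_sq {α : Type*} [MeasurableSpace α]
    {μ : Measure α} [IsFiniteMeasure μ] {f : α → ℝ} (hf : Integrable f μ)
    (hf2 : Integrable (fun a => f a ^ 2) μ) :
    (∫ a, |f a| ∂μ) ^ 2 ≤ μ.real univ * ∫ a, f a ^ 2 ∂μ := by
  -- `r ↦ ∫ (r |f| - 1)²` is a nonnegative quadratic, so its discriminant is nonpositive.
  have hquad : ∀ r : ℝ,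
      0 ≤ (∫ a, f a ^ 2 ∂μ) * (r * r) + (-2 * ∫ a, |f a| ∂μ) * r + μ.real univ := by
    intro r
    have hexpand : ∀ a, (r * |f a| - 1) ^ 2 = r * r * f a ^ 2 + -2 * r * |f a| + 1 := by
      intro a; rw [← sq_abs (f a)]; ring
    have : 0 ≤ ∫ a, (r * |f a| - 1) ^ 2 ∂μ := integral_nonneg fun a => sq_nonneg _
    simp only [hexpand] at this
    have hf2' : Integrable (fun a => r * r * f a ^ 2) μ := hf2.const_mul _
    have hf' : Integrable (fun a => -2 * r * |f a|) μ := hf.abs.const_mul _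
    have hsum : Integrable (fun a => r * r * f a ^ 2 + -2 * r * |f a|) μ := hf2'.add hf'
    rw [integral_add hsum (integrable_const _), integral_add hf2' hf', integral_const_mul,
      integral_const_mul, integral_const, smul_eq_mul, mul_one] at this
    linarith
  have := discrim_le_zero hquad
  rw [discrim] at this
  linarith

open intervalIntegral

theorem integral_abs_le_sqrt_mul_sqrt_integral_sq {f : ℝ → ℝ} {a b : ℝ} (hab : a ≤ b)
    (hf : IntervalIntegrable f volume a b)
    (hf2 : IntervalIntegrable (fun x => f x ^ 2) volume a b) :
    ∫ x in a..b, |f x| ≤ √(b - a) * √(∫ x in a..b, f x ^ 2) := by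
  rw [← Real.sqrt_mul (sub_nonneg.2 hab)]
  refine (le_abs_self _).trans (Real.abs_le_sqrt ?_)
  have := sq_integral_abs_le_measureReal_univ_mul_integral_sq hf.1 hf2.1
  rwa [measureReal_restrict_apply_univ, Real.volume_real_Ioc_of_le hab, ← integral_of_le hab,
    ← integral_of_le hab] at this

theorem IntervalIntegrable.posPart {f : ℝ → ℝ} {a b : ℝ} (hf : IntervalIntegrable f volume a b) :
    IntervalIntegrable (fun x => (f x)⁺) volume a b :=
  ⟨hf.1.pos_part, hf.2.pos_part⟩

theorem IntervalIntegrable.negPart {f : ℝ → ℝ} {a b : ℝ} (hf : IntervalIntegrable f volume a b) :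
    IntervalIntegrable (fun x => (f x)⁻) volume a b :=
  ⟨hf.1.neg_part, hf.2.neg_part⟩

theorem integral_le_integral_posPart_of_subinterval {f : ℝ → ℝ} {a b c d : ℝ}
    (hf : IntervalIntegrable f volume a b) (hac : a ≤ c) (hcd : c ≤ d) (hdb : d ≤ b) :
    ∫ x in c..d, f x ≤ ∫ x in a..b, (f x)⁺ := by
  have hsub : uIcc c d ⊆ uIcc a b := by
    rw [uIcc_of_le hcd, uIcc_of_le (hac.trans (hcd.trans hdb))]
    exact Icc_subset_Icc hac hdb
  calc ∫ x in c..d, f x ≤ ∫ x in c..d, (f x)⁺ :=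
        integral_mono_on hcd (hf.mono_set hsub) (hf.posPart.mono_set hsub)
          fun x _ => le_posPart _
    _ ≤ ∫ x in a..b, (f x)⁺ :=
        integral_mono_interval hac hcd hdb (ae_of_all _ fun x => posPart_nonneg _) hf.posPart

theorem neg_half_integral_abs_le_integral_of_integral_eq_zero {f : ℝ → ℝ} {a b c d : ℝ}
    (hf : IntervalIntegrable f volume a b) (hmean : ∫ x in a..b, f x = 0)
    (hc : c ∈ Icc a b) (hd : d ∈ Icc a b) :
    -(∫ x in a..b, |f x|) / 2 ≤ ∫ x in c..d, f x := by
  have hdiff : (∫ x in a..b, (f x)⁺) - ∫ x in a..b, (f x)⁻ = 0 := by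
    rw [← integral_sub hf.posPart hf.negPart, ← hmean]
    simp only [posPart_sub_negPart]
  have hsum : (∫ x in a..b, (f x)⁺) + ∫ x in a..b, (f x)⁻ = ∫ x in a..b, |f x| := by
    rw [← integral_add hf.posPart hf.negPart]
    simp only [posPart_add_negPart]
  rcases le_total c d with hcd | hdc
  · have := integral_le_integral_posPart_of_subinterval hf.neg hc.1 hcd hd.2
    simp only [Pi.neg_apply, posPart_neg, intervalIntegral.integral_neg] at this
    linarith
  · have := integral_le_integral_posPart_of_subinterval hf hd.1 hdc hc.2
    rw [integral_symm d c]
    linarith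

theorem periodic_variation_bound (T : ℝ) (hT : 0 < T)
    (x : ℝ → ℝ) (hx : ContDiff ℝ 1 x) (hper : Function.Periodic x T)
    (t₀ t : ℝ) (ht₀ : t₀ ∈ Set.Icc 0 T) (ht : t ∈ Set.Icc 0 T) :
    x t - x t₀ ≥ -(Real.sqrt T / 2) * Real.sqrt (∫ s in (0:ℝ)..T, (deriv x s)^2) := by
  have hdiff : Differentiable ℝ x := hx.differentiable one_ne_zero
  have hderiv : Continuous (deriv x) := hx.continuous_deriv le_rfl
  have hftc : ∀ a b, ∫ s in a..b, deriv x s = x b - x a := fun a b =>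
    integral_deriv_eq_sub (fun s _ => hdiff s) (hderiv.intervalIntegrable a b)
  have hmean : ∫ s in (0:ℝ)..T, deriv x s = 0 := by
    rw [hftc, sub_eq_zero]
    simpa only [zero_add] using hper 0
  calc x t - x t₀ = ∫ s in t₀..t, deriv x s := (hftc t₀ t).symm
    _ ≥ -(∫ s in (0:ℝ)..T, |deriv x s|) / 2 :=
        neg_half_integral_abs_le_integral_of_integral_eq_zero
          (hderiv.intervalIntegrable 0 T) hmean ht₀ ht
    _ ≥ -(Real.sqrt T * Real.sqrt (∫ s in (0:ℝ)..T, (deriv x s)^2)) / 2 := by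
        gcongr
        simpa only [sub_zero] using integral_abs_le_sqrt_mul_sqrt_integral_sq hT.le
          (hderiv.intervalIntegrable 0 T) ((hderiv.pow 2).intervalIntegrable 0 T)
    _ = -(Real.sqrt T / 2) * Real.sqrt (∫ s in (0:ℝ)..T, (deriv x s)^2) := by ring
end

section
/- Let x : [0, T] → ℝ be a continuously differentiable function that is T-periodic with x(0) = x(T) = 0, x(t) ≥ 0 for all t, and x not identically zero. Suppose ∫₀ᵀ ẋ² dt ≤ ∫₀ᵀ x² dt - α ∫₀ᵀ |x|³ dt - ∫₀ᵀ W(t) x(t) dt, where α ≥ 0 and W(t) ≥ 0. Then T ≥ π. -/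
/-!
If `k * T < π`, the function `w t = k * cot (k * t + c)` (for a suitable phase `c`) has no pole on
`[0, T]` and solves the Riccati equation `w' = -(k² + w²)`. Expanding `∫ (ẋ - w x)² ≥ 0` and
integrating the cross term `2 x ẋ w` by parts (the boundary terms vanish since `x(0) = x(T) = 0`)
gives the Wirtinger-type bound `k² ∫ x² ≤ ∫ ẋ²`. The hypothesis bounds `∫ ẋ²` by `∫ x²`, which is
positive, so `k ≤ 1` for every `k < π / T`, i.e. `T ≥ π`.
-/

open Real Set MeasureTheory intervalIntegral

theorem hasDerivAt_const_mul_cot_mul_add {k c t : ℝ} (h : sin (k * t + c) ≠ 0) :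
    HasDerivAt (fun s => k * cot (k * s + c)) (-(k ^ 2 + (k * cot (k * t + c)) ^ 2)) t := by
  have hlin : HasDerivAt (fun s => k * s + c) k t := by
    simpa using ((hasDerivAt_id t).const_mul k).add_const c
  have hcot :=
    (((hasDerivAt_cos _).comp t hlin).fun_div ((hasDerivAt_sin _).comp t hlin) h).const_mul k
  simp only [Function.comp_apply, ← cot_eq_cos_div_sin] at hcot
  refine hcot.congr_deriv ?_
  rw [cot_eq_cos_div_sin]
  field_simp
  ring

theorem integral_mul_sq_le_integral_deriv_sq_of_riccati {a b : ℝ} (hab : a ≤ b)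
    {x w q : ℝ → ℝ} (hx : ContDiff ℝ 1 x) (ha : x a = 0) (hb : x b = 0)
    (hw : ∀ t ∈ Icc a b, HasDerivAt w (-(q t + w t ^ 2)) t) (hq : ContinuousOn q (Icc a b)) :
    ∫ t in a..b, q t * x t ^ 2 ≤ ∫ t in a..b, deriv x t ^ 2 := by
  rw [← uIcc_of_le hab] at hw hq
  have hxc : Continuous x := hx.continuous
  have hx'c : Continuous (deriv x) := hx.continuous_deriv le_rfl
  have hwc : ContinuousOn w (uIcc a b) := fun t ht => (hw t ht).continuousAt.continuousWithinAt
  set D : ℝ → ℝ := fun t => 2 * x t * deriv x t * w t - x t ^ 2 * (q t + w t ^ 2) with hD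
  have hD_deriv : ∀ t ∈ uIcc a b, HasDerivAt (fun s => x s ^ 2 * w s) (D t) t := fun t ht =>
    (((hx.differentiable one_ne_zero t).hasDerivAt.fun_pow 2).fun_mul (hw t ht)).congr_deriv
      (by simp only [hD]; ring)
  have hD_int : IntervalIntegrable D volume a b := by
    apply ContinuousOn.intervalIntegrable; fun_prop
  have hD_zero : ∫ t in a..b, D t = 0 := by
    rw [integral_eq_sub_of_hasDerivAt hD_deriv hD_int]
    simp [ha, hb]
  have hqx : IntervalIntegrable (fun t => q t * x t ^ 2) volume a b := by
    apply ContinuousOn.intervalIntegrable; fun_prop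
  have hsq : IntervalIntegrable (fun t => (deriv x t - w t * x t) ^ 2) volume a b := by
    apply ContinuousOn.intervalIntegrable; fun_prop
  -- Completing the square: ẋ² = q x² + (ẋ - w x)² + (x² w)'.
  calc ∫ t in a..b, q t * x t ^ 2
      ≤ (∫ t in a..b, q t * x t ^ 2) + ∫ t in a..b, (deriv x t - w t * x t) ^ 2 :=
        le_add_of_nonneg_right (integral_nonneg hab fun _ _ => sq_nonneg _)
    _ = ∫ t in a..b, (q t * x t ^ 2 + (deriv x t - w t * x t) ^ 2 + D t) := by
        rw [integral_add (hqx.add hsq) hD_int, hD_zero, add_zero, integral_add hqx hsq]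
    _ = ∫ t in a..b, deriv x t ^ 2 := by
        congr 1; funext t; simp only [hD]; ring

theorem sq_mul_integral_sq_le_integral_deriv_sq {a b k : ℝ} (hab : a ≤ b) (hk : 0 < k)
    (hkπ : k * (b - a) < π) {x : ℝ → ℝ} (hx : ContDiff ℝ 1 x) (ha : x a = 0) (hb : x b = 0) :
    k ^ 2 * ∫ t in a..b, x t ^ 2 ≤ ∫ t in a..b, deriv x t ^ 2 := by
  -- The phase `k * (t - a) + ε` stays in `(0, π)` on `[a, b]`, so the cotangent has no pole.
  set ε := (π - k * (b - a)) / 2 with hε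
  have hsin : ∀ t ∈ Icc a b, sin (k * t + (ε - k * a)) ≠ 0 := fun t ht => by
    have h₁ : 0 ≤ k * (t - a) := mul_nonneg hk.le (sub_nonneg.2 ht.1)
    have h₂ : k * (t - a) ≤ k * (b - a) := by gcongr; exact ht.2
    refine (sin_pos_of_pos_of_lt_pi ?_ ?_).ne' <;> linarith
  rw [← intervalIntegral.integral_const_mul]
  exact integral_mul_sq_le_integral_deriv_sq_of_riccati hab hx ha hb
    (fun t ht => hasDerivAt_const_mul_cot_mul_add (hsin t ht)) continuousOn_const

theorem period_lower_bound_general (T α : ℝ) (hT : 0 < T) (hα : 0 ≤ α)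
    (x W : ℝ → ℝ) (hx : ContDiff ℝ 1 x)
    (h0 : x 0 = 0) (hTend : x T = 0)
    (hnonneg : ∀ t ∈ Set.Icc (0:ℝ) T, 0 ≤ x t)
    (hnontriv : ∃ t ∈ Set.Icc (0:ℝ) T, x t ≠ 0)
    (hW : ∀ t ∈ Set.Icc (0:ℝ) T, 0 ≤ W t)
    (hineq : ∫ t in (0:ℝ)..T, (deriv x t)^2
      ≤ (∫ t in (0:ℝ)..T, (x t)^2) - α * (∫ t in (0:ℝ)..T, |x t|^3)
        - ∫ t in (0:ℝ)..T, W t * x t) :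
    T ≥ Real.pi := by
  by_contra! hTπ
  obtain ⟨k, hk1, hkT⟩ := exists_between ((one_lt_div hT).mpr hTπ)
  have hwirtinger : k ^ 2 * ∫ t in (0:ℝ)..T, x t ^ 2 ≤ ∫ t in (0:ℝ)..T, deriv x t ^ 2 :=
    sq_mul_integral_sq_le_integral_deriv_sq hT.le (by linarith)
      (by rwa [sub_zero, ← lt_div_iff₀ hT]) hx h0 hTend
  have hcube : 0 ≤ α * ∫ t in (0:ℝ)..T, |x t| ^ 3 :=
    mul_nonneg hα (integral_nonneg hT.le fun t _ => by positivity)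
  have hWx : 0 ≤ ∫ t in (0:ℝ)..T, W t * x t :=
    integral_nonneg hT.le fun t ht => mul_nonneg (hW t ht) (hnonneg t ht)
  obtain ⟨t₀, ht₀, hxt₀⟩ := hnontriv
  have hsq : 0 < ∫ t in (0:ℝ)..T, x t ^ 2 :=
    integral_pos hT (hx.continuous.pow 2).continuousOn (fun t _ => sq_nonneg _)
      ⟨t₀, ht₀, by positivity⟩
  linarith [mul_lt_mul_of_pos_right (one_lt_pow₀ hk1 two_ne_zero) hsq]

theorem period_lower_bound (T α : ℝ) (hT : 0 < T) (hα : 0 ≤ α)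
    (x W : ℝ → ℝ) (hx : ContDiff ℝ 1 x) (hper : Function.Periodic x T)
    (h0 : x 0 = 0) (hTend : x T = 0)
    (hnonneg : ∀ t ∈ Set.Icc (0:ℝ) T, 0 ≤ x t)
    (hnontriv : ∃ t ∈ Set.Icc (0:ℝ) T, x t ≠ 0)
    (hW : ∀ t ∈ Set.Icc (0:ℝ) T, 0 ≤ W t)
    (hWcont : Continuous W)
    (hineq : ∫ t in (0:ℝ)..T, (deriv x t)^2
      ≤ (∫ t in (0:ℝ)..T, (x t)^2) - α * (∫ t in (0:ℝ)..T, |x t|^3)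
        - ∫ t in (0:ℝ)..T, W t * x t) :
    T ≥ Real.pi :=
  period_lower_bound_general T α hT hα x W hx h0 hTend hnonneg hnontriv hW hineq
end
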